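/- There is a constant C > 0 such that for all sequences ε with |ε|_∞ ≤ 1/2, all i ≥ 0 and all Lipschitz f : ℕ → ℝ, |(Q_ε^i − Q_0^i) f|_∞ ≤ C i Lip(f) |ε|_∞. -/

import Mathlib

/-- The cookie transition operator `Q_ε`. -/
noncomputable def Qeps (ε : ℕ → ℝ) (f : ℕ → ℝ) (r : ℕ) : ℝ :=
  ∑' ℓ : ℕ, f (r + ℓ + 1) *
    ((2 : ℝ) ^ (-(ℓ + 1 : ℤ)) * (∏ i ∈ Finset.range ℓ, (1 + ε (r + i + 1)))
      * (1 - ε (r + ℓ + 1)))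

/-- The geometric(1/2) transition operator `Q_0`. -/
noncomputable def Q0 (f : ℕ → ℝ) (r : ℕ) : ℝ :=
  ∑' ℓ : ℕ, f (r + ℓ + 1) * (2 : ℝ) ^ (-(ℓ + 1 : ℤ))

/-!
Both operators average `f` over a forward jump `r ↦ r + ℓ + 1` against probability weights
decaying geometrically in `ℓ`. Writing `Q_ε^{n+1} - Q_0^{n+1} = Q_ε (Q_ε^n - Q_0^n) + R_ε Q_0^n`,
the first term is controlled because `Q_ε` is a sup-norm contraction, and the second because
`Q_0^n f` is `K`-Lipschitz: subtracting the constant `f r` (both kernels have mass one) gives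
`|R_ε f r| ≤ K ∑ (ℓ + 1) |w_ℓ - u_ℓ|`, where the cookie weight `w_ℓ` and the geometric weight `u_ℓ`
differ by a product of `ℓ + 1` factors `1 ± ε`, so `|w_ℓ - u_ℓ| ≤ (ℓ + 1) |ε|_∞ (√e / 2)^(ℓ + 1)`.
Induction on the number of iterates then gives the bound, linear in `i`.
-/

open Finset Filter Topology
open scoped NNReal

def LinearGrowth (g : ℕ → ℝ) : Prop :=
  ∃ A B : ℝ, ∀ n, |g n| ≤ A + B * n

lemma LinearGrowth.of_abs_sub_le {g h : ℕ → ℝ} {M : ℝ} (hh : LinearGrowth h)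
    (hgh : ∀ n, |g n - h n| ≤ M) : LinearGrowth g := by
  obtain ⟨A, B, hAB⟩ := hh
  refine ⟨A + M, B, fun n => ?_⟩
  linarith [abs_sub_abs_le_abs_sub (g n) (h n), hgh n, hAB n]

lemma LinearGrowth.const (c : ℝ) : LinearGrowth fun _ => c :=
  ⟨|c|, 0, fun _ => by simp⟩

lemma LipschitzWith.abs_sub_le_nat_add_succ {K : ℝ≥0} {f : ℕ → ℝ} (hf : LipschitzWith K f)
    (r ℓ : ℕ) : |f (r + ℓ + 1) - f r| ≤ K * (ℓ + 1) := by
  have h := hf.dist_le_mul (r + ℓ + 1) r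
  rw [Real.dist_eq, Nat.dist_eq] at h
  push_cast at h
  rwa [show (r : ℝ) + ℓ + 1 - r = ℓ + 1 by ring, abs_of_nonneg (by positivity : (0 : ℝ) ≤ ℓ + 1)]
    at h

lemma LipschitzWith.linearGrowth {K : ℝ≥0} {f : ℕ → ℝ} (hf : LipschitzWith K f) :
    LinearGrowth f := by
  refine ⟨|f 0|, K, fun n => ?_⟩
  have h := hf.dist_le_mul n 0
  rw [Real.dist_eq, Nat.dist_eq, Nat.cast_zero, sub_zero, Nat.abs_cast] at h
  linarith [abs_sub_abs_le_abs_sub (f n) (f 0)]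

noncomputable def forwardOp (w : ℕ → ℕ → ℝ) (f : ℕ → ℝ) (r : ℕ) : ℝ :=
  ∑' ℓ, f (r + ℓ + 1) * w r ℓ

structure IsForwardKernel (w : ℕ → ℕ → ℝ) : Prop where
  nonneg : ∀ r ℓ, 0 ≤ w r ℓ
  hasSum_one : ∀ r, HasSum (w r) 1
  exists_le_geometric : ∃ ρ : ℝ, 0 ≤ ρ ∧ ρ < 1 ∧ ∀ r ℓ, w r ℓ ≤ ρ ^ ℓ

namespace IsForwardKernel

variable {w w' : ℕ → ℕ → ℝ}

lemma summable_mul (hw : IsForwardKernel w) {g : ℕ → ℝ} (hg : LinearGrowth g) (r : ℕ) :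
    Summable fun ℓ => g (r + ℓ + 1) * w r ℓ := by
  obtain ⟨A, B, hAB⟩ := hg
  obtain ⟨ρ, hρ0, hρ1, hwρ⟩ := hw.exists_le_geometric
  have hρ : ‖ρ‖ < 1 := by rwa [Real.norm_of_nonneg hρ0]
  have hmajorant : Summable fun ℓ : ℕ => (A + B * (r + 1)) * ρ ^ ℓ + B * ((ℓ : ℝ) ^ 1 * ρ ^ ℓ) :=
    ((summable_geometric_of_lt_one hρ0 hρ1).mul_left _).add
      ((summable_pow_mul_geometric_of_norm_lt_one 1 hρ).mul_left B)
  refine hmajorant.of_norm_bounded fun ℓ => ?_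
  rw [Real.norm_eq_abs, abs_mul, abs_of_nonneg (hw.nonneg r ℓ)]
  have hg : |g (r + ℓ + 1)| ≤ A + B * (r + 1) + B * ℓ := by
    have := hAB (r + ℓ + 1)
    push_cast at this
    linarith
  calc |g (r + ℓ + 1)| * w r ℓ ≤ (A + B * (r + 1) + B * ℓ) * ρ ^ ℓ :=
        mul_le_mul hg (hwρ r ℓ) (hw.nonneg r ℓ) ((abs_nonneg _).trans hg)
    _ = _ := by ring

lemma forwardOp_sub (hw : IsForwardKernel w) {g h : ℕ → ℝ} (hg : LinearGrowth g)
    (hh : LinearGrowth h) (r : ℕ) :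
    forwardOp w (g - h) r = forwardOp w g r - forwardOp w h r := by
  rw [forwardOp, forwardOp, forwardOp, ← (hw.summable_mul hg r).tsum_sub (hw.summable_mul hh r)]
  simp only [Pi.sub_apply, sub_mul]

lemma forwardOp_const (hw : IsForwardKernel w) (c : ℝ) (r : ℕ) :
    forwardOp w (fun _ => c) r = c := by
  rw [forwardOp, tsum_mul_left, (hw.hasSum_one r).tsum_eq, mul_one]

lemma abs_forwardOp_sub_le (hw : IsForwardKernel w) {g h : ℕ → ℝ} {M : ℝ}
    (hh : LinearGrowth h) (hgh : ∀ n, |g n - h n| ≤ M) (r : ℕ) :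
    |forwardOp w g r - forwardOp w h r| ≤ M := by
  rw [← hw.forwardOp_sub (hh.of_abs_sub_le hgh) hh, ← Real.norm_eq_abs, forwardOp]
  have hM : HasSum (fun ℓ => M * w r ℓ) M := by simpa using (hw.hasSum_one r).mul_left M
  refine tsum_of_norm_bounded hM fun ℓ => ?_
  rw [Real.norm_eq_abs, abs_mul, abs_of_nonneg (hw.nonneg r ℓ)]
  exact mul_le_mul_of_nonneg_right (hgh _) (hw.nonneg r ℓ)

lemma abs_forwardOp_sub_forwardOp_le (hw : IsForwardKernel w) (hw' : IsForwardKernel w')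
    {K : ℝ≥0} {f : ℕ → ℝ} (hf : LipschitzWith K f) {b : ℕ → ℝ} {B : ℝ} (hb : HasSum b B)
    (r : ℕ) (hwb : ∀ ℓ : ℕ, ((ℓ : ℝ) + 1) * |w r ℓ - w' r ℓ| ≤ b ℓ) :
    |forwardOp w f r - forwardOp w' f r| ≤ K * B := by
  -- Both kernels have mass one, so centring `f` at `f r` shifts both values by `f r`,
  -- and the centred integrand is bounded by `K (ℓ + 1)`.
  set g : ℕ → ℝ := f - fun _ => f r
  have hg : LinearGrowth g := hf.linearGrowth.of_abs_sub_le (M := |f r|) fun n => by simp [g]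
  have hcentre {u : ℕ → ℕ → ℝ} (hu : IsForwardKernel u) :
      forwardOp u g r = forwardOp u f r - f r := by
    rw [hu.forwardOp_sub hf.linearGrowth (.const (f r)), hu.forwardOp_const]
  have hdiff : forwardOp w f r - forwardOp w' f r = ∑' ℓ, g (r + ℓ + 1) * (w r ℓ - w' r ℓ) := by
    simp only [mul_sub]
    rw [(hw.summable_mul hg r).tsum_sub (hw'.summable_mul hg r)]
    change _ = forwardOp w g r - forwardOp w' g r
    rw [hcentre hw, hcentre hw']
    ring
  rw [hdiff, ← Real.norm_eq_abs]
  refine tsum_of_norm_bounded (hb.mul_left (K : ℝ)) fun ℓ => ?_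
  rw [Real.norm_eq_abs, abs_mul]
  calc |g (r + ℓ + 1)| * |w r ℓ - w' r ℓ| ≤ (K * (ℓ + 1)) * |w r ℓ - w' r ℓ| :=
        mul_le_mul_of_nonneg_right (hf.abs_sub_le_nat_add_succ r ℓ) (abs_nonneg _)
    _ = K * (((ℓ : ℝ) + 1) * |w r ℓ - w' r ℓ|) := by ring
    _ ≤ K * b ℓ := mul_le_mul_of_nonneg_left (hwb ℓ) K.2

lemma lipschitzWith_forwardOp {v : ℕ → ℝ} (hv : IsForwardKernel fun _ => v) {K : ℝ≥0}
    {f : ℕ → ℝ} (hf : LipschitzWith K f) : LipschitzWith K (forwardOp (fun _ => v) f) := by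
  refine LipschitzWith.of_dist_le_mul fun r r' => ?_
  have hshift : ∀ ℓ, |f (r + ℓ + 1) - f (r' + ℓ + 1)| ≤ K * dist r r' := fun ℓ => by
    have h := hf.dist_le_mul (r + ℓ + 1) (r' + ℓ + 1)
    rw [Real.dist_eq, Nat.dist_eq] at h
    rw [Nat.dist_eq]
    push_cast at h
    convert h using 3
    ring
  rw [Real.dist_eq, forwardOp, forwardOp,
    ← (hv.summable_mul hf.linearGrowth r).tsum_sub (hv.summable_mul hf.linearGrowth r'),
    ← Real.norm_eq_abs]
  have hmass : HasSum (fun ℓ => K * dist r r' * v ℓ) (K * dist r r') := by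
    simpa using (hv.hasSum_one 0).mul_left (K * dist r r')
  refine tsum_of_norm_bounded hmass fun ℓ => ?_
  rw [Real.norm_eq_abs, ← sub_mul, abs_mul, abs_of_nonneg (hv.nonneg 0 ℓ)]
  exact mul_le_mul_of_nonneg_right (hshift ℓ) (hv.nonneg 0 ℓ)

end IsForwardKernel

noncomputable def cookieWeight (ε : ℕ → ℝ) (r ℓ : ℕ) : ℝ :=
  (2 : ℝ) ^ (-(ℓ + 1 : ℤ)) * (∏ i ∈ range ℓ, (1 + ε (r + i + 1))) * (1 - ε (r + ℓ + 1))

noncomputable def geomWeight (ℓ : ℕ) : ℝ :=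
  (2 : ℝ) ^ (-(ℓ + 1 : ℤ))

lemma Qeps_eq_forwardOp (ε : ℕ → ℝ) : Qeps ε = forwardOp (cookieWeight ε) := rfl

lemma Q0_eq_forwardOp : Q0 = forwardOp fun _ => geomWeight := rfl

lemma geomWeight_eq (ℓ : ℕ) : geomWeight ℓ = 1 / 2 ^ (ℓ + 1) := by
  rw [geomWeight, zpow_neg, one_div]
  norm_cast

lemma isForwardKernel_geomWeight : IsForwardKernel fun _ => geomWeight where
  nonneg _ ℓ := by rw [geomWeight_eq]; positivity
  hasSum_one _ := by
    convert hasSum_geometric_two' 1 using 1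
    funext ℓ
    rw [geomWeight_eq, pow_succ']
    field_simp
  exists_le_geometric := ⟨1 / 2, by norm_num, by norm_num, fun _ ℓ => by
    rw [geomWeight_eq, one_div_pow]
    exact one_div_le_one_div_of_le (by positivity) (pow_le_pow_right₀ (by norm_num) ℓ.le_succ)⟩

-- A jump of length `ℓ` from `r`: `ℓ` successes, the `i`-th with probability `(1 + ε (r + i + 1)) / 2`,
-- followed by one failure.
lemma cookieWeight_eq_prod (ε : ℕ → ℝ) (r ℓ : ℕ) :
    cookieWeight ε r ℓ =
      (∏ i ∈ range ℓ, (1 + ε (r + i + 1)) / 2) * ((1 - ε (r + ℓ + 1)) / 2) := by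
  change geomWeight ℓ * _ * _ = _
  rw [geomWeight_eq, prod_div_distrib, prod_const, card_range]
  field_simp
  ring

lemma isForwardKernel_cookieWeight {ε : ℕ → ℝ} (hε : ∀ i, |ε i| ≤ 1 / 2) :
    IsForwardKernel (cookieWeight ε) := by
  set P : ℕ → ℕ → ℝ := fun r n => ∏ i ∈ range n, (1 + ε (r + i + 1)) / 2
  have hq : ∀ j, 0 ≤ (1 + ε j) / 2 ∧ (1 + ε j) / 2 ≤ 3 / 4 := fun j => by
    have := abs_le.1 (hε j)
    constructor <;> linarith
  have hP0 : ∀ r n, 0 ≤ P r n := fun r n => prod_nonneg fun i _ => (hq _).1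
  have hP : ∀ r n, P r n ≤ (3 / 4) ^ n := fun r n =>
    (prod_le_prod (fun i _ => (hq _).1) fun i _ => (hq (r + i + 1)).2).trans_eq
      (by rw [prod_const, card_range])
  have htelescope : ∀ r ℓ, cookieWeight ε r ℓ = P r ℓ - P r (ℓ + 1) := fun r ℓ => by
    rw [cookieWeight_eq_prod]
    simp only [P, prod_range_succ]
    ring
  have hnonneg : ∀ r ℓ, 0 ≤ cookieWeight ε r ℓ := fun r ℓ => by
    rw [cookieWeight_eq_prod]
    exact mul_nonneg (hP0 r ℓ) (by linarith [(hq (r + ℓ + 1)).2])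
  refine ⟨hnonneg, fun r => ?_, ⟨3 / 4, by norm_num, by norm_num, fun r ℓ => ?_⟩⟩
  · rw [hasSum_iff_tendsto_nat_of_nonneg (hnonneg r)]
    have hpartial : ∀ n, ∑ ℓ ∈ range n, cookieWeight ε r ℓ = 1 - P r n := fun n => by
      simp only [htelescope, sum_range_sub', P, prod_range_zero]
    have hP_lim : Tendsto (P r) atTop (𝓝 0) := squeeze_zero (hP0 r) (hP r)
      (tendsto_pow_atTop_nhds_zero_of_lt_one (by norm_num) (by norm_num))
    simpa [hpartial] using hP_lim.const_sub 1
  · rw [cookieWeight_eq_prod]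
    calc P r ℓ * ((1 - ε (r + ℓ + 1)) / 2) ≤ P r ℓ * 1 :=
          mul_le_mul_of_nonneg_left (by linarith [(hq (r + ℓ + 1)).1]) (hP0 r ℓ)
      _ ≤ (3 / 4) ^ ℓ := by rw [mul_one]; exact hP r ℓ

noncomputable def cookieRatio : ℝ := Real.exp (1 / 2) / 2

lemma cookieRatio_pos : 0 < cookieRatio := by unfold cookieRatio; positivity

lemma cookieRatio_lt_one : cookieRatio < 1 := by
  have h := Real.exp_bound_div_one_sub_of_interval' (x := 1 / 2) (by norm_num) (by norm_num)
  rw [cookieRatio, div_lt_one two_pos]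
  exact h.trans_eq (by norm_num)

lemma Real.exp_sub_one_le_mul_exp (x : ℝ) : Real.exp x - 1 ≤ x * Real.exp x := by
  have h := mul_le_mul_of_nonneg_left (Real.add_one_le_exp (-x)) (Real.exp_pos x).le
  rw [← Real.exp_add, add_neg_cancel, Real.exp_zero] at h
  linarith

lemma abs_cookieWeight_sub_geomWeight_le {ε : ℕ → ℝ} {δ : ℝ} (hεδ : ∀ j, |ε j| ≤ δ)
    (hδ : δ ≤ 1 / 2) (r ℓ : ℕ) :
    |cookieWeight ε r ℓ - geomWeight ℓ| ≤ (ℓ + 1) * δ * cookieRatio ^ (ℓ + 1) := by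
  set a : ℕ → ℝ := fun k => if k = ℓ then -ε (r + ℓ + 1) else ε (r + k + 1)
  have hδ0 : 0 ≤ δ := (abs_nonneg _).trans (hεδ 0)
  have hu0 : 0 ≤ geomWeight ℓ := isForwardKernel_geomWeight.nonneg 0 ℓ
  have hprod : cookieWeight ε r ℓ = geomWeight ℓ * ∏ k ∈ range (ℓ + 1), (1 + a k) := by
    rw [prod_range_succ, prod_congr rfl fun k hk =>
      show 1 + a k = 1 + ε (r + k + 1) by simp [a, (mem_range.1 hk).ne]]
    simp only [a, if_pos rfl, cookieWeight, geomWeight]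
    ring
  have hsum : ∑ k ∈ range (ℓ + 1), ‖a k‖ ≤ (ℓ + 1) * δ := by
    have ha : ∀ k, ‖a k‖ ≤ δ := fun k => by
      simp only [a, Real.norm_eq_abs]
      split_ifs
      · rw [abs_neg]; exact hεδ _
      · exact hεδ _
    simpa using sum_le_sum fun k (_ : k ∈ range (ℓ + 1)) => ha k
  have hexp_le : Real.exp ((ℓ + 1) * δ) ≤ Real.exp (1 / 2) ^ (ℓ + 1) := by
    rw [← Real.exp_nat_mul]
    push_cast
    gcongr
  calc |cookieWeight ε r ℓ - geomWeight ℓ|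
      = geomWeight ℓ * ‖∏ k ∈ range (ℓ + 1), (1 + a k) - 1‖ := by
        rw [hprod, ← mul_sub_one, abs_mul, abs_of_nonneg hu0, Real.norm_eq_abs]
    _ ≤ geomWeight ℓ * (Real.exp ((ℓ + 1) * δ) - 1) := by
        gcongr
        exact (norm_prod_one_add_sub_one_le _ _).trans (by gcongr)
    _ ≤ geomWeight ℓ * ((ℓ + 1) * δ * Real.exp (1 / 2) ^ (ℓ + 1)) := by
        gcongr
        exact (Real.exp_sub_one_le_mul_exp _).trans (by gcongr)
    _ = (ℓ + 1) * δ * cookieRatio ^ (ℓ + 1) := by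
        rw [geomWeight_eq, cookieRatio, div_pow]
        ring

noncomputable def cookieConst : ℝ := ∑' ℓ : ℕ, ((ℓ : ℝ) + 1) ^ 2 * cookieRatio ^ (ℓ + 1)

lemma summable_cookieConst :
    Summable fun ℓ : ℕ => ((ℓ : ℝ) + 1) ^ 2 * cookieRatio ^ (ℓ + 1) := by
  have h := summable_pow_mul_geometric_of_norm_lt_one 2
    (by rw [Real.norm_of_nonneg cookieRatio_pos.le]; exact cookieRatio_lt_one : ‖cookieRatio‖ < 1)
  refine ((summable_nat_add_iff 1).2 h).congr fun ℓ => ?_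
  push_cast
  ring

lemma cookieConst_pos : 0 < cookieConst :=
  summable_cookieConst.tsum_pos (fun _ => by have := cookieRatio_pos; positivity) 0
    (by simpa using cookieRatio_pos)

lemma abs_Qeps_sub_Q0_le {ε : ℕ → ℝ} {δ : ℝ} (hεδ : ∀ j, |ε j| ≤ δ) (hδ : δ ≤ 1 / 2)
    {K : ℝ≥0} {f : ℕ → ℝ} (hf : LipschitzWith K f) (r : ℕ) :
    |Qeps ε f r - Q0 f r| ≤ cookieConst * K * δ := by
  have hε : ∀ i, |ε i| ≤ 1 / 2 := fun i => (hεδ i).trans hδ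
  have hb : HasSum _ (δ * cookieConst) := summable_cookieConst.hasSum.mul_left δ
  have h := (isForwardKernel_cookieWeight hε).abs_forwardOp_sub_forwardOp_le
    isForwardKernel_geomWeight hf hb r fun ℓ => by
      calc ((ℓ : ℝ) + 1) * |cookieWeight ε r ℓ - geomWeight ℓ|
          ≤ (ℓ + 1) * ((ℓ + 1) * δ * cookieRatio ^ (ℓ + 1)) :=
            mul_le_mul_of_nonneg_left (abs_cookieWeight_sub_geomWeight_le hεδ hδ r ℓ)
              (by positivity)
        _ = δ * (((ℓ : ℝ) + 1) ^ 2 * cookieRatio ^ (ℓ + 1)) := by ring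
  rw [Qeps_eq_forwardOp, Q0_eq_forwardOp]
  exact h.trans_eq (by ring)

lemma LipschitzWith.iterate_Q0 {K : ℝ≥0} {f : ℕ → ℝ} (hf : LipschitzWith K f) (n : ℕ) :
    LipschitzWith K (Q0^[n] f) := by
  induction n with
  | zero => exact hf
  | succ n ih =>
    rw [Function.iterate_succ_apply', Q0_eq_forwardOp]
    exact isForwardKernel_geomWeight.lipschitzWith_forwardOp ih

theorem abs_iterate_Qeps_sub_iterate_Q0_le {ε : ℕ → ℝ} {δ : ℝ} (hεδ : ∀ j, |ε j| ≤ δ)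
    (hδ : δ ≤ 1 / 2) {K : ℝ≥0} {f : ℕ → ℝ} (hf : LipschitzWith K f) (n r : ℕ) :
    |(Qeps ε)^[n] f r - Q0^[n] f r| ≤ cookieConst * n * K * δ := by
  have hε : ∀ i, |ε i| ≤ 1 / 2 := fun i => (hεδ i).trans hδ
  induction n generalizing r with
  | zero => simp
  | succ n ih =>
    have hh := hf.iterate_Q0 n
    have hcontract : |Qeps ε ((Qeps ε)^[n] f) r - Qeps ε (Q0^[n] f) r| ≤ cookieConst * n * K * δ :=
      (isForwardKernel_cookieWeight hε).abs_forwardOp_sub_le hh.linearGrowth ih r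
    rw [Function.iterate_succ_apply', Function.iterate_succ_apply']
    calc _ ≤ |Qeps ε ((Qeps ε)^[n] f) r - Qeps ε (Q0^[n] f) r|
          + |Qeps ε (Q0^[n] f) r - Q0 (Q0^[n] f) r| := abs_sub_le _ _ _
      _ ≤ cookieConst * n * K * δ + cookieConst * K * δ :=
          add_le_add hcontract (abs_Qeps_sub_Q0_le hεδ hδ hh r)
      _ = cookieConst * ↑(n + 1) * K * δ := by push_cast; ring

theorem stmt_10 :
    ∃ C : ℝ, 0 < C ∧
      ∀ ε : ℕ → ℝ, (∀ i, |ε i| ≤ 1 / 2) →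
        ∀ i : ℕ, ∀ f : ℕ → ℝ, ∀ K : ℝ, 0 ≤ K →
          (∀ r r' : ℕ, |f r - f r'| ≤ K * |(r : ℝ) - r'|) →
          ∀ r : ℕ,
            |(Qeps ε)^[i] f r - Q0^[i] f r| ≤ C * i * K * (⨆ j, |ε j|) := by
  refine ⟨cookieConst, cookieConst_pos, fun ε hε i f K hK hf r => ?_⟩
  have hbdd : BddAbove (Set.range fun j => |ε j|) := ⟨1 / 2, Set.forall_mem_range.2 hε⟩
  lift K to ℝ≥0 using hK
  have hfK : LipschitzWith K f := LipschitzWith.of_dist_le_mul fun r r' => by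
    simpa only [Real.dist_eq, Nat.dist_eq] using hf r r'
  exact abs_iterate_Qeps_sub_iterate_Q0_le (le_ciSup hbdd) (ciSup_le hε) hfK i r
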